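/- arXiv:1206.0337 — 2 statements merged into one kernel-verified Lean document; each statement's English description precedes it below -/
import Mathlib

section
/- Let M : ℝ → ℝ be a positive differentiable function, v : ℝ → ℝ³ a differentiable velocity and f : ℝ → ℝ³ a force such that d/dt(M(t)·v(t)) = f(t) and c²·dM/dt = f(t)·v(t) for all t (with c > 0). Then the quantity M(t)² − c⁻²·M(t)²·|v(t)|² is constant in t. -/
open scoped RealInnerProductSpace

/-! Since `d/dt ‖M v‖² = 2 ⟪M v, f⟫ = 2 M ⟪f, v⟫ = c² d/dt M²`, the quantity `M² − c⁻² ‖M v‖²`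
has zero derivative, and `‖M v‖² = M² ‖v‖²`. -/

section

variable {E : Type*} [NormedAddCommGroup E] [InnerProductSpace ℝ E]
  {c : ℝ} {M : ℝ → ℝ} {v : ℝ → E}

theorem hasDerivAt_sq_sub_inv_sq_mul_norm_smul_sq {M' t : ℝ} {F : E} (hc : c ≠ 0)
    (hM : HasDerivAt M M' t) (hp : HasDerivAt (fun s => M s • v s) F t)
    (hE : c ^ 2 * M' = ⟪F, v t⟫) :
    HasDerivAt (fun s => M s ^ 2 - c⁻¹ ^ 2 * ‖M s • v s‖ ^ 2) 0 t := by
  have hM' : M' = c⁻¹ ^ 2 * ⟪F, v t⟫ := by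
    rw [← hE]
    field_simp
  refine ((hM.pow 2).sub (hp.norm_sq.const_mul (c⁻¹ ^ 2))).congr_deriv ?_
  rw [real_inner_smul_left, real_inner_comm, hM']
  push_cast
  ring

theorem sq_sub_inv_sq_mul_norm_smul_sq_eq {F : ℝ → E} (hc : c ≠ 0) (hM : Differentiable ℝ M)
    (hp : ∀ t, HasDerivAt (fun s => M s • v s) (F t) t)
    (hE : ∀ t, c ^ 2 * deriv M t = ⟪F t, v t⟫) (s t : ℝ) :
    M s ^ 2 - c⁻¹ ^ 2 * ‖M s • v s‖ ^ 2 = M t ^ 2 - c⁻¹ ^ 2 * ‖M t • v t‖ ^ 2 := by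
  have hderiv (t : ℝ) :=
    hasDerivAt_sq_sub_inv_sq_mul_norm_smul_sq hc (hM t).hasDerivAt (hp t) (hE t)
  exact is_const_of_deriv_eq_zero (fun t => (hderiv t).differentiableAt)
    (fun t => (hderiv t).deriv) s t

end

theorem stmt0_general (c : ℝ) (hc : 0 < c)
    (M : ℝ → ℝ) (v f : ℝ → EuclideanSpace ℝ (Fin 3))
    (hMdiff : Differentiable ℝ M)
    (hNewton : ∀ t, HasDerivAt (fun s => M s • v s) (f t) t)
    (hEnergy : ∀ t, c ^ 2 * deriv M t = ⟪f t, v t⟫) :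
    ∀ s t : ℝ,
      M s ^ 2 - c⁻¹ ^ 2 * M s ^ 2 * ‖v s‖ ^ 2
        = M t ^ 2 - c⁻¹ ^ 2 * M t ^ 2 * ‖v t‖ ^ 2 := by
  intro s t
  have h := sq_sub_inv_sq_mul_norm_smul_sq_eq hc.ne' hMdiff hNewton hEnergy s t
  simpa only [norm_smul, mul_pow, Real.norm_eq_abs, sq_abs, mul_assoc] using h

/-- If `M` is a positive differentiable mass, `v` a differentiable velocity and `f` a force
with `d/dt (M v) = f` and `c² M' = ⟪f, v⟫`, then `M² − c⁻² M² ‖v‖²` is constant. -/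
theorem stmt0 (c : ℝ) (hc : 0 < c)
    (M : ℝ → ℝ) (v f : ℝ → EuclideanSpace ℝ (Fin 3))
    (hMpos : ∀ t, 0 < M t)
    (hMdiff : Differentiable ℝ M) (hvdiff : Differentiable ℝ v)
    (hNewton : ∀ t, HasDerivAt (fun s => M s • v s) (f t) t)
    (hEnergy : ∀ t, c ^ 2 * deriv M t = ⟪f t, v t⟫) :
    ∀ s t : ℝ,
      M s ^ 2 - c⁻¹ ^ 2 * M s ^ 2 * ‖v s‖ ^ 2
        = M t ^ 2 - c⁻¹ ^ 2 * M t ^ 2 * ‖v t‖ ^ 2 :=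
  stmt0_general c hc M v f hMdiff hNewton hEnergy
end

section
/- Let M : ℝ → ℝ and v : ℝ → ℝ³ satisfy d/dt(M v) = f and c² dM/dt = f·v with M(t₀) > 0 and |v(t₀)| < c. Then on any interval containing t₀ where M > 0 one has M(t) = M₀·(1 − |v(t)|²/c²)^{−1/2}, where M₀ = M(t₀)·(1 − |v(t₀)|²/c²)^{1/2}. -/
open scoped RealInnerProductSpace

/-- Einstein's mass–velocity relation `M = γ M₀` on any interval containing `t₀`
on which `M` stays positive. -/
theorem stmt1 (c : ℝ) (hc : 0 < c) (t₀ : ℝ)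
    (M : ℝ → ℝ) (v f : ℝ → EuclideanSpace ℝ (Fin 3))
    (hMdiff : Differentiable ℝ M) (hvdiff : Differentiable ℝ v)
    (hNewton : ∀ t, HasDerivAt (fun s => M s • v s) (f t) t)
    (hEnergy : ∀ t, c ^ 2 * deriv M t = ⟪f t, v t⟫)
    (hM0 : 0 < M t₀) (hv0 : ‖v t₀‖ < c)
    (M₀ : ℝ) (hM₀ : M₀ = M t₀ * (1 - ‖v t₀‖ ^ 2 / c ^ 2) ^ ((1 : ℝ) / 2)) :
    ∀ a b : ℝ, t₀ ∈ Set.Icc a b → (∀ s ∈ Set.Icc a b, 0 < M s) →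
      ∀ t ∈ Set.Icc a b,
        M t = M₀ * (1 - ‖v t‖ ^ 2 / c ^ 2) ^ (-(1 : ℝ) / 2) := by
  intro a b ht₀ hMpos t ht
  -- the conserved quantity
  set g : ℝ → ℝ := fun s => c ^ 2 * (M s) ^ 2 - ⟪M s • v s, M s • v s⟫ with hg
  have hgderiv : ∀ s, HasDerivAt g 0 s := by
    intro s
    have h1 : HasDerivAt (fun u => c ^ 2 * (M u) ^ 2)
        (c ^ 2 * (2 * M s * deriv M s)) s := by
      have := ((hMdiff s).hasDerivAt.pow 2).const_mul (c ^ 2)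
      simpa using this
    have h2 : HasDerivAt (fun u => ⟪M u • v u, M u • v u⟫)
        (⟪M s • v s, f s⟫ + ⟪f s, M s • v s⟫) s :=
      (hNewton s).inner ℝ (hNewton s)
    have h3 := h1.sub h2
    have hval : c ^ 2 * (2 * M s * deriv M s) -
        (⟪M s • v s, f s⟫ + ⟪f s, M s • v s⟫) = 0 := by
      rw [real_inner_smul_left, real_inner_smul_right, real_inner_comm (v s) (f s)]
      linear_combination (2 * M s) * hEnergy s + (2 * M s) * real_inner_comm (v s) (f s)
    rw [hval] at h3
    exact h3
  have hconst : ∀ s, g s = g t₀ := fun s =>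
    is_const_of_deriv_eq_zero (fun u => (hgderiv u).differentiableAt)
      (fun u => (hgderiv u).deriv) s t₀
  have hMt : 0 < M t := hMpos t ht
  have hMt₀ : 0 < M t₀ := hM0
  have hkey0 := hconst t
  simp only [hg, real_inner_smul_left, real_inner_smul_right,
    real_inner_self_eq_norm_sq, norm_smul, Real.norm_eq_abs, mul_pow,
    sq_abs] at hkey0
  have hc2 : (0 : ℝ) < c ^ 2 := by positivity
  have hA0 : 0 < 1 - ‖v t₀‖ ^ 2 / c ^ 2 := by
    have : ‖v t₀‖ ^ 2 < c ^ 2 := by nlinarith [norm_nonneg (v t₀)]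
    have := (div_lt_one hc2).mpr this
    linarith
  have key : M t ^ 2 * (1 - ‖v t‖ ^ 2 / c ^ 2)
      = M t₀ ^ 2 * (1 - ‖v t₀‖ ^ 2 / c ^ 2) := by
    field_simp
    nlinarith [hkey0]
  have hA : 0 < 1 - ‖v t‖ ^ 2 / c ^ 2 := by
    have h1 : 0 < M t₀ ^ 2 * (1 - ‖v t₀‖ ^ 2 / c ^ 2) := by positivity
    nlinarith [sq_nonneg (M t)]
  have hsq := congrArg Real.sqrt key
  rw [Real.sqrt_mul (sq_nonneg _), Real.sqrt_mul (sq_nonneg _),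
    Real.sqrt_sq hMt.le, Real.sqrt_sq hMt₀.le] at hsq
  have hsA : (0 : ℝ) < Real.sqrt (1 - ‖v t‖ ^ 2 / c ^ 2) := Real.sqrt_pos.mpr hA
  rw [hM₀, neg_div, Real.rpow_neg hA.le, ← Real.sqrt_eq_rpow, ← Real.sqrt_eq_rpow]
  rw [← hsq, mul_assoc, mul_inv_cancel₀ hsA.ne', mul_one]
end
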